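/- arXiv:1804.09354 — 2 statements merged into one kernel-verified Lean document; each statement's English description precedes it below -/
import Mathlib

section
/- Let DMU_o = (x_o,y_o), o ∈ J, be FDH_V-efficient. Then Left-IRS prevails at DMU_o if and only if for every j ∈ J either α_{jo} ≥ 1 or β_{jo} < α_{jo}. -/
open Set

noncomputable section

/-- The FDH variable-returns-to-scale technology:
`T = {(x,y) : y ≥ 0 and ∃ j, x_j ≤ x and y ≤ y_j}`. -/
def FDH {n m s : ℕ} (x : Fin n → Fin m → ℝ) (y : Fin n → Fin s → ℝ) :
    Set ((Fin m → ℝ) × (Fin s → ℝ)) :=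
  {p | (∀ r, 0 ≤ p.2 r) ∧ ∃ j : Fin n, (∀ i, x j i ≤ p.1 i) ∧ (∀ r, p.2 r ≤ y j r)}

/-- DMU_o is FDH_V-efficient: no (x,y) ∈ T with x ≤ x_o, y ≥ y_o, (x,y) ≠ (x_o,y_o). -/
def FDHEfficient {n m s : ℕ} (x : Fin n → Fin m → ℝ) (y : Fin n → Fin s → ℝ)
    (o : Fin n) : Prop :=
  ¬ ∃ p ∈ FDH x y, (∀ i, p.1 i ≤ x o i) ∧ (∀ r, y o r ≤ p.2 r) ∧ p ≠ (x o, y o)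

/-- `α_{jo} = max_i x_{ij} / x_{io}`. -/
def alphaRatio {n m s : ℕ} (x : Fin n → Fin m → ℝ) (_y : Fin n → Fin s → ℝ)
    (o j : Fin n) : ℝ :=
  ⨆ i : Fin m, x j i / x o i

/-- `β_{jo} = min_r y_{rj} / y_{ro}`. -/
def betaRatio {n m s : ℕ} (_x : Fin n → Fin m → ℝ) (y : Fin n → Fin s → ℝ)
    (o j : Fin n) : ℝ :=
  ⨅ r : Fin s, y j r / y o r

/-- `θ_o(D) = inf {θ : ∃ j ∈ J, δ ∈ D, δ x_j ≤ θ x_o, δ y_j ≥ y_o}`. -/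
def thetaEff {n m s : ℕ} (x : Fin n → Fin m → ℝ) (y : Fin n → Fin s → ℝ)
    (o : Fin n) (D : Set ℝ) : ℝ :=
  sInf {θ : ℝ | ∃ j : Fin n, ∃ δ ∈ D,
    (∀ i, δ * x j i ≤ θ * x o i) ∧ (∀ r, y o r ≤ δ * y j r)}

/-- G-IRS prevails at DMU_o iff `θ_o^{ND} > θ_o^{C} = θ_o^{NI}`. -/
def GIRS {n m s : ℕ} (x : Fin n → Fin m → ℝ) (y : Fin n → Fin s → ℝ)
    (o : Fin n) : Prop :=
  thetaEff x y o (Ici 1) > thetaEff x y o (Ici 0) ∧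
    thetaEff x y o (Ici 0) = thetaEff x y o (Icc 0 1)

/-- G-DRS prevails at DMU_o iff `θ_o^{NI} > θ_o^{C} = θ_o^{ND}`. -/
def GDRS {n m s : ℕ} (x : Fin n → Fin m → ℝ) (y : Fin n → Fin s → ℝ)
    (o : Fin n) : Prop :=
  thetaEff x y o (Icc 0 1) > thetaEff x y o (Ici 0) ∧
    thetaEff x y o (Ici 0) = thetaEff x y o (Ici 1)

/-- G-CRS prevails at DMU_o iff `θ_o^{C} = θ_o^{NI} = θ_o^{ND} = 1`. -/
def GCRS {n m s : ℕ} (x : Fin n → Fin m → ℝ) (y : Fin n → Fin s → ℝ)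
    (o : Fin n) : Prop :=
  thetaEff x y o (Ici 0) = 1 ∧ thetaEff x y o (Icc 0 1) = 1 ∧
    thetaEff x y o (Ici 1) = 1

/-- G-SCRS prevails at DMU_o iff `θ_o^{C} = θ_o^{NI} = θ_o^{ND} < 1`. -/
def GSCRS {n m s : ℕ} (x : Fin n → Fin m → ℝ) (y : Fin n → Fin s → ℝ)
    (o : Fin n) : Prop :=
  thetaEff x y o (Ici 0) = thetaEff x y o (Icc 0 1) ∧
    thetaEff x y o (Icc 0 1) = thetaEff x y o (Ici 1) ∧
    thetaEff x y o (Ici 1) < 1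

/-- Response function `β_o(α) = sup {β : (α x_o, β y_o) ∈ T}`. -/
def respFun {n m s : ℕ} (x : Fin n → Fin m → ℝ) (y : Fin n → Fin s → ℝ)
    (o : Fin n) (α : ℝ) : ℝ :=
  sSup {β : ℝ | ((fun i => α * x o i), (fun r => β * y o r)) ∈ FDH x y}

/-- Maximum incremental ratio `σ_o^+ = sup_{α > 1} (β_o(α) - 1)/(α - 1)`. -/
def sigmaPlus {n m s : ℕ} (x : Fin n → Fin m → ℝ) (y : Fin n → Fin s → ℝ)
    (o : Fin n) : ℝ :=
  sSup {ρ : ℝ | ∃ α : ℝ, 1 < α ∧ ρ = (respFun x y o α - 1) / (α - 1)}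

/-- Minimum decremental ratio `σ_o^- = inf {(β_o(α)-1)/(α-1) : α < 1 feasible}`,
taken in the extended reals (so it is `+∞` when no `α < 1` is feasible). -/
def sigmaMinus {n m s : ℕ} (x : Fin n → Fin m → ℝ) (y : Fin n → Fin s → ℝ)
    (o : Fin n) : EReal :=
  sInf {ρ : EReal | ∃ α : ℝ, α < 1 ∧
    (∃ β : ℝ, ((fun i => α * x o i), (fun r => β * y o r)) ∈ FDH x y) ∧
    ρ = (((respFun x y o α - 1) / (α - 1) : ℝ) : EReal)}

/-- Right-IRS: `(δ x_o, δ y_o) ∈ int T` for some `δ > 1`. -/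
def RightIRS {n m s : ℕ} (x : Fin n → Fin m → ℝ) (y : Fin n → Fin s → ℝ)
    (o : Fin n) : Prop :=
  ∃ δ : ℝ, 1 < δ ∧
    ((fun i => δ * x o i), (fun r => δ * y o r)) ∈ interior (FDH x y)

/-- Right-DRS: `(δ x_o, δ y_o) ∉ T` for every `δ > 1`. -/
def RightDRS {n m s : ℕ} (x : Fin n → Fin m → ℝ) (y : Fin n → Fin s → ℝ)
    (o : Fin n) : Prop :=
  ∀ δ : ℝ, 1 < δ →
    ((fun i => δ * x o i), (fun r => δ * y o r)) ∉ FDH x y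

/-- Right-CRS: neither Right-IRS nor Right-DRS. -/
def RightCRS {n m s : ℕ} (x : Fin n → Fin m → ℝ) (y : Fin n → Fin s → ℝ)
    (o : Fin n) : Prop :=
  ¬ RightIRS x y o ∧ ¬ RightDRS x y o

/-- Left-IRS: `(δ x_o, δ y_o) ∉ T` for every `δ ∈ (0,1)`. -/
def LeftIRS {n m s : ℕ} (x : Fin n → Fin m → ℝ) (y : Fin n → Fin s → ℝ)
    (o : Fin n) : Prop :=
  ∀ δ : ℝ, 0 < δ → δ < 1 →
    ((fun i => δ * x o i), (fun r => δ * y o r)) ∉ FDH x y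

/-- Left-DRS: `(δ x_o, δ y_o) ∈ int T` for some `δ ∈ (0,1)`. -/
def LeftDRS {n m s : ℕ} (x : Fin n → Fin m → ℝ) (y : Fin n → Fin s → ℝ)
    (o : Fin n) : Prop :=
  ∃ δ : ℝ, 0 < δ ∧ δ < 1 ∧
    ((fun i => δ * x o i), (fun r => δ * y o r)) ∈ interior (FDH x y)

/-- Left-CRS: neither Left-IRS nor Left-DRS. -/
def LeftCRS {n m s : ℕ} (x : Fin n → Fin m → ℝ) (y : Fin n → Fin s → ℝ)
    (o : Fin n) : Prop :=
  ¬ LeftIRS x y o ∧ ¬ LeftDRS x y o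

/-! `(δ x_o, δ y_o) ∈ T` exactly when `α_{jo} ≤ δ ≤ β_{jo}` for some `j`, so Left-IRS says that no
interval `[α_{jo}, β_{jo}]` meets `(0, 1)`. As `α_{jo} > 0`, this means each of these intervals is
empty or lies in `[1, ∞)`. -/

section Ratios

variable {n m s : ℕ} (x : Fin n → Fin m → ℝ) (y : Fin n → Fin s → ℝ) (o : Fin n)

theorem alphaRatio_le_iff [Nonempty (Fin m)] (hx : ∀ i, 0 < x o i) (j : Fin n) {δ : ℝ} :
    alphaRatio x y o j ≤ δ ↔ ∀ i, x j i ≤ δ * x o i := by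
  simp only [alphaRatio, ciSup_le_iff (Finite.bddAbove_range _), div_le_iff₀ (hx _)]

theorem le_betaRatio_iff [Nonempty (Fin s)] (hy : ∀ r, 0 < y o r) (j : Fin n) {δ : ℝ} :
    δ ≤ betaRatio x y o j ↔ ∀ r, δ * y o r ≤ y j r := by
  simp only [betaRatio, le_ciInf_iff (Finite.bddBelow_range _), le_div_iff₀ (hy _)]

theorem alphaRatio_pos [Nonempty (Fin m)] (hx : ∀ j i, 0 < x j i) (j : Fin n) :
    0 < alphaRatio x y o j := by
  obtain ⟨i⟩ := ‹Nonempty (Fin m)›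
  exact (div_pos (hx j i) (hx o i)).trans_le
    (le_ciSup (f := fun i => x j i / x o i) (Finite.bddAbove_range _) i)

theorem smul_mem_FDH_iff [Nonempty (Fin m)] [Nonempty (Fin s)] (hx : ∀ i, 0 < x o i)
    (hy : ∀ r, 0 < y o r) {δ : ℝ} (hδ : 0 ≤ δ) :
    ((fun i => δ * x o i), (fun r => δ * y o r)) ∈ FDH x y ↔
      ∃ j, alphaRatio x y o j ≤ δ ∧ δ ≤ betaRatio x y o j := by
  simp only [FDH, mem_ofPred_eq, alphaRatio_le_iff x y o hx, le_betaRatio_iff x y o hy]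
  exact and_iff_right fun r => mul_nonneg hδ (hy r).le

theorem leftIRS_iff [Nonempty (Fin m)] [Nonempty (Fin s)] (hx : ∀ i, 0 < x o i)
    (hy : ∀ r, 0 < y o r) :
    LeftIRS x y o ↔
      ∀ j, ∀ δ ∈ Ioo (0 : ℝ) 1, δ ∉ Icc (alphaRatio x y o j) (betaRatio x y o j) := by
  have hmem δ (hδ : 0 < δ) := smul_mem_FDH_iff x y o hx hy hδ.le
  simp +contextual only [LeftIRS, hmem, mem_Ioo, mem_Icc, and_imp, not_exists]
  exact ⟨fun h j δ h0 h1 => h δ h0 h1 j, fun h δ h0 h1 j => h j δ h0 h1⟩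

end Ratios

theorem forall_Ioo_zero_one_notMem_Icc_iff {a b : ℝ} (ha : 0 < a) :
    (∀ δ ∈ Ioo (0 : ℝ) 1, δ ∉ Icc a b) ↔ 1 ≤ a ∨ b < a := by
  constructor
  · intro h
    by_contra! hab
    exact h a ⟨ha, hab.1⟩ ⟨le_rfl, hab.2⟩
  · rintro hab δ ⟨-, hδ1⟩ ⟨haδ, hδb⟩
    rcases hab with h | h <;> linarith

theorem stmt7_general {n m s : ℕ} (hm : 0 < m) (hs : 0 < s)
    (x : Fin n → Fin m → ℝ) (y : Fin n → Fin s → ℝ)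
    (hx : ∀ j i, 0 < x j i) (hy : ∀ j r, 0 < y j r)
    (o : Fin n) :
    LeftIRS x y o ↔
      ∀ j : Fin n, 1 ≤ alphaRatio x y o j ∨ betaRatio x y o j < alphaRatio x y o j := by
  have : Nonempty (Fin m) := ⟨⟨0, hm⟩⟩
  have : Nonempty (Fin s) := ⟨⟨0, hs⟩⟩
  rw [leftIRS_iff x y o (hx o) (hy o)]
  exact forall_congr' fun j => forall_Ioo_zero_one_notMem_Icc_iff (alphaRatio_pos x y o hx j)

/-- Left-IRS prevails at the FDH_V-efficient DMU_o iff for every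
`j ∈ J`, `α_{jo} ≥ 1` or `β_{jo} < α_{jo}`. -/
theorem stmt7 {n m s : ℕ} (hm : 0 < m) (hs : 0 < s)
    (x : Fin n → Fin m → ℝ) (y : Fin n → Fin s → ℝ)
    (hx : ∀ j i, 0 < x j i) (hy : ∀ j r, 0 < y j r)
    (o : Fin n) (heff : FDHEfficient x y o) :
    LeftIRS x y o ↔
      ∀ j : Fin n, 1 ≤ alphaRatio x y o j ∨ betaRatio x y o j < alphaRatio x y o j :=
  stmt7_general hm hs x y hx hy o
end
end

section
/- Let DMU_o = (x_o,y_o), o ∈ J, be FDH_V-efficient. Then Left-DRS prevails at DMU_o if and only if there exists j ∈ J such that α_{jo} < 1 and α_{jo} < β_{jo}. -/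
open Set

noncomputable section

/-! Left-DRS at `o` amounts to a unit `j` and a scale `δ ∈ (0,1)` with `x_j < δ x_o` and
`δ y_o < y_j` componentwise: such points `(δ x_o, δ y_o)` are exactly the interior points of the
FDH technology on the ray through `(x_o, y_o)`.  In terms of the ratios, these inequalities read
`α_{jo} < δ < β_{jo}`, and since `α_{jo} ≥ 0` such a `δ < 1` exists iff `α_{jo} < 1` and
`α_{jo} < β_{jo}`. -/

open Topology

theorem Real.iSup_lt_iff_of_finite {ι : Type*} [Finite ι] {f : ι → ℝ} {a : ℝ} (ha : 0 < a) :
    ⨆ i, f i < a ↔ ∀ i, f i < a := by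
  refine ⟨fun h i => (le_ciSup (finite_range f).bddAbove i).trans_lt h, fun h => ?_⟩
  cases isEmpty_or_nonempty ι
  · rwa [Real.iSup_of_isEmpty]
  · obtain ⟨i, hi⟩ := exists_eq_ciSup_of_finite (f := f)
    exact hi ▸ h i

theorem lt_ciInf_iff_of_finite {ι α : Type*} [ConditionallyCompleteLinearOrder α] [Nonempty ι]
    [Finite ι] {f : ι → α} {a : α} : a < ⨅ i, f i ↔ ∀ i, a < f i := by
  refine ⟨fun h i => h.trans_le (ciInf_le (finite_range f).bddBelow i), fun h => ?_⟩
  obtain ⟨i, hi⟩ := exists_eq_ciInf_of_finite (f := f)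
  exact hi ▸ h i

section FDH

variable {n m s : ℕ} {x : Fin n → Fin m → ℝ} {y : Fin n → Fin s → ℝ}

theorem mem_interior_FDH_iff {p : (Fin m → ℝ) × (Fin s → ℝ)} (hp : ∀ r, 0 < p.2 r) :
    p ∈ interior (FDH x y) ↔ ∃ j, (∀ i, x j i < p.1 i) ∧ ∀ r, p.2 r < y j r := by
  constructor
  · intro hint
    have hshift : ∀ᶠ t in 𝓝[>] (0 : ℝ),
        ((fun i => p.1 i - t, fun r => p.2 r + t) : (Fin m → ℝ) × (Fin s → ℝ)) ∈ FDH x y := by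
      have hcont : Continuous fun t : ℝ =>
          ((fun i => p.1 i - t, fun r => p.2 r + t) : (Fin m → ℝ) × (Fin s → ℝ)) := by
        fun_prop
      refine nhdsWithin_le_nhds (hcont.tendsto' 0 p ?_ (mem_interior_iff_mem_nhds.mp hint))
      ext <;> simp
    obtain ⟨t, ⟨-, j, hxj, hyj⟩, ht⟩ := (hshift.and self_mem_nhdsWithin).exists
    refine ⟨j, fun i => ?_, fun r => ?_⟩
    · linarith [hxj i, show (0 : ℝ) < t from ht]
    · linarith [hyj r, show (0 : ℝ) < t from ht]
  · rintro ⟨j, hxj, hyj⟩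
    have hopen : IsOpen ((univ.pi fun i => Ioi (x j i)) ×ˢ univ.pi fun r => Ioo 0 (y j r)) :=
      (isOpen_set_pi finite_univ fun i _ => isOpen_Ioi).prod
        (isOpen_set_pi finite_univ fun r _ => isOpen_Ioo)
    refine interior_maximal ?_ hopen ⟨fun i _ => hxj i, fun r _ => ⟨hp r, hyj r⟩⟩
    rintro q ⟨hq₁, hq₂⟩
    exact ⟨fun r => (hq₂ r trivial).1.le, j, fun i => (hq₁ i trivial).le,
      fun r => (hq₂ r trivial).2.le⟩

variable {o j : Fin n}

theorem alphaRatio_nonneg (hx : ∀ j i, 0 < x j i) : 0 ≤ alphaRatio x y o j :=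
  Real.iSup_nonneg fun i => (div_pos (hx j i) (hx o i)).le

theorem alphaRatio_lt_iff (hx : ∀ i, 0 < x o i) {δ : ℝ} (hδ : 0 < δ) :
    alphaRatio x y o j < δ ↔ ∀ i, x j i < δ * x o i := by
  simp only [alphaRatio, Real.iSup_lt_iff_of_finite hδ, div_lt_iff₀ (hx _)]

theorem lt_betaRatio_iff (hs : 0 < s) (hy : ∀ r, 0 < y o r) {δ : ℝ} :
    δ < betaRatio x y o j ↔ ∀ r, δ * y o r < y j r := by
  have : Nonempty (Fin s) := Fin.pos_iff_nonempty.mp hs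
  simp only [betaRatio, lt_ciInf_iff_of_finite, lt_div_iff₀ (hy _)]

theorem leftDRS_iff_exists_alphaRatio_lt_lt_betaRatio (hs : 0 < s) (hx : ∀ j i, 0 < x j i)
    (hy : ∀ j r, 0 < y j r) :
    LeftDRS x y o ↔
      ∃ δ : ℝ, 0 < δ ∧ δ < 1 ∧ ∃ j, alphaRatio x y o j < δ ∧ δ < betaRatio x y o j := by
  refine exists_congr fun δ => and_congr_right fun hδ => and_congr_right fun _ => ?_
  rw [mem_interior_FDH_iff fun r => mul_pos hδ (hy o r)]
  simp only [alphaRatio_lt_iff (hx o) hδ, lt_betaRatio_iff hs (hy o)]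

end FDH

theorem exists_pos_lt_one_between_iff {a b : ℝ} (ha : 0 ≤ a) :
    (∃ δ : ℝ, 0 < δ ∧ δ < 1 ∧ a < δ ∧ δ < b) ↔ a < 1 ∧ a < b := by
  constructor
  · rintro ⟨δ, -, hδ1, haδ, hδb⟩
    exact ⟨haδ.trans hδ1, haδ.trans hδb⟩
  · rintro ⟨ha1, hab⟩
    obtain ⟨δ, haδ, hδ⟩ := exists_between (lt_min ha1 hab)
    exact ⟨δ, ha.trans_lt haδ, hδ.trans_le (min_le_left _ _), haδ,
      hδ.trans_le (min_le_right _ _)⟩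

theorem stmt8_general {n m s : ℕ} (hs : 0 < s)
    (x : Fin n → Fin m → ℝ) (y : Fin n → Fin s → ℝ)
    (hx : ∀ j i, 0 < x j i) (hy : ∀ j r, 0 < y j r)
    (o : Fin n) :
    LeftDRS x y o ↔
      ∃ j : Fin n, alphaRatio x y o j < 1 ∧ alphaRatio x y o j < betaRatio x y o j := by
  rw [leftDRS_iff_exists_alphaRatio_lt_lt_betaRatio hs hx hy]
  refine ⟨fun ⟨δ, hδ0, hδ1, j, hα, hβ⟩ => ⟨j, ?_⟩, fun ⟨j, hj⟩ => ?_⟩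
  · exact (exists_pos_lt_one_between_iff (alphaRatio_nonneg hx)).mp ⟨δ, hδ0, hδ1, hα, hβ⟩
  · obtain ⟨δ, hδ0, hδ1, hα, hβ⟩ := (exists_pos_lt_one_between_iff (alphaRatio_nonneg hx)).mpr hj
    exact ⟨δ, hδ0, hδ1, j, hα, hβ⟩

/-- Left-DRS prevails at the FDH_V-efficient DMU_o iff there exists
`j ∈ J` with `α_{jo} < 1` and `α_{jo} < β_{jo}`. -/
theorem stmt8 {n m s : ℕ} (hm : 0 < m) (hs : 0 < s)
    (x : Fin n → Fin m → ℝ) (y : Fin n → Fin s → ℝ)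
    (hx : ∀ j i, 0 < x j i) (hy : ∀ j r, 0 < y j r)
    (o : Fin n) (heff : FDHEfficient x y o) :
    LeftDRS x y o ↔
      ∃ j : Fin n, alphaRatio x y o j < 1 ∧ alphaRatio x y o j < betaRatio x y o j :=
  stmt8_general hs x y hx hy o
end
end
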